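/- Let n, ℓ ∈ ℕ, let v ∈ ℤ with gcd(v, ℓ) = 1 and let v̄ be an inverse of v modulo ℓ. Let r1, r2, d ∈ ℂ with Re(r1) > 0, Re(r2) > 0 and Re(d) > 0. Then the function 𝓔(s) has a simple pole at s = −r1, and lim_{s→−r1} (s + r1)·𝓔(s) = −[Γ(d + r1 + 1)/Γ(d + r2 + 1)]·(2π√n)^{−r1+r2−1}·ℓ^{−r2}·ζ(1 + r1), where ζ is the Riemann zeta function. -/

import Mathlib

/-!
Of the two Hurwitz factors in the Estermann function only `ζ(w, m₂/ℓ)` has a pole at `w = 1`,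
with residue `1`. Hence the residue of `E(w; -v̄/ℓ, -r₁)` at `w = 1` is
`ℓ^(-r₁-2) · Σ_{m₁,m₂} e(-v̄ m₁ m₂/ℓ) ζ(1 + r₁, m₁/ℓ)`; as `v̄` is prime to `ℓ`, the sum over `m₂`
is a complete sum of `ℓ`-th roots of unity that vanishes unless `m₁ = ℓ`, which leaves
`ℓ^(-r₁-1) ζ(1 + r₁)`. The substitution `w = 1 - s - r₁` reverses the sign of the residue, and the
Gamma quotient and the power in `𝓔` are holomorphic and nonzero at `s = -r₁`.
-/

open Real Filter Topology HurwitzZeta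

noncomputable section

/-- The Estermann zeta function `E(s; v/ℓ, a)`, defined as a meromorphic function of `s` via
Hurwitz zeta functions. -/
def Est (a : ℂ) (ℓ : ℕ) (v : ℤ) (s : ℂ) : ℂ :=
  (ℓ : ℂ) ^ (a - 2 * s) *
    ∑ m1 ∈ Finset.Icc 1 ℓ, ∑ m2 ∈ Finset.Icc 1 ℓ,
      Complex.exp (2 * (π : ℂ) * Complex.I * v * m1 * m2 / ℓ) *
        hurwitzZeta (((m1 : ℝ) / (ℓ : ℝ) : ℝ) : UnitAddCircle) (s - a) *
        hurwitzZeta (((m2 : ℝ) / (ℓ : ℝ) : ℝ) : UnitAddCircle) s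

/-- `𝓔(s) = [Γ(d−s+1)/Γ(d+s+r1+r2+1)]·(2π√n/ℓ)^{2s+r1+r2−1}·E(1−s−r1; −v̄/ℓ, −r1)`. -/
def calE (n ℓ : ℕ) (vbar : ℤ) (r1 r2 d : ℂ) (s : ℂ) : ℂ :=
  Complex.Gamma (d - s + 1) / Complex.Gamma (d + s + r1 + r2 + 1) *
    ((2 * π * Real.sqrt n / (ℓ : ℝ) : ℝ) : ℂ) ^ (2 * s + r1 + r2 - 1) *
    Est (-r1) ℓ (-vbar) (1 - s - r1)

lemma Complex.exp_two_pi_I_mul_div_eq_one_iff {ℓ : ℕ} (hℓ : ℓ ≠ 0) (t : ℤ) :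
    Complex.exp (2 * π * Complex.I * t / ℓ) = 1 ↔ (ℓ : ℤ) ∣ t := by
  rw [Complex.exp_eq_one_iff]
  refine exists_congr fun k => ?_
  rw [div_eq_iff (Nat.cast_ne_zero.mpr hℓ), eq_comm,
    show (k : ℂ) * (2 * π * Complex.I) * ℓ = 2 * π * Complex.I * (ℓ * k) by ring,
    mul_right_inj' (by simp [pi_ne_zero])]
  exact_mod_cast eq_comm

lemma Complex.sum_Icc_exp_two_pi_I_mul_div {ℓ : ℕ} (hℓ : ℓ ≠ 0) (t : ℤ) :
    ∑ m ∈ Finset.Icc 1 ℓ, Complex.exp (2 * π * Complex.I * t * m / ℓ) =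
      if (ℓ : ℤ) ∣ t then (ℓ : ℂ) else 0 := by
  set u := Complex.exp (2 * π * Complex.I * t / ℓ) with hu_def
  have hpow (m : ℕ) : Complex.exp (2 * π * Complex.I * t * m / ℓ) = u ^ m := by
    rw [← Complex.exp_nat_mul]; ring_nf
  have hu_pow : u ^ ℓ = 1 := by
    rw [← hpow, mul_div_cancel_right₀ _ (Nat.cast_ne_zero.mpr hℓ : (ℓ : ℂ) ≠ 0), mul_comm]
    exact Complex.exp_int_mul_two_pi_mul_I t
  simp only [hpow, ← Complex.exp_two_pi_I_mul_div_eq_one_iff hℓ t, ← hu_def]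
  split_ifs with hu
  · simp [hu]
  · rw [← Finset.Ico_add_one_right_eq_Icc, geom_sum_Ico hu (by omega), pow_succ, hu_pow]
    simp

lemma Int.isCoprime_of_mul_modEq_one {v w n : ℤ} (h : v * w ≡ 1 [ZMOD n]) : IsCoprime w n := by
  obtain ⟨k, hk⟩ := h.dvd
  exact ⟨v, k, by linear_combination -hk⟩

lemma sum_Icc_sum_Icc_exp_mul_mul {ℓ : ℕ} (hℓ : 0 < ℓ) {v : ℤ} (hv : IsCoprime v ℓ)
    (f : ℕ → ℂ) :
    ∑ m1 ∈ Finset.Icc 1 ℓ, ∑ m2 ∈ Finset.Icc 1 ℓ,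
      Complex.exp (2 * π * Complex.I * v * m1 * m2 / ℓ) * f m1 = ℓ * f ℓ := by
  have hinner : ∀ m1 ∈ Finset.Icc 1 ℓ, ∑ m2 ∈ Finset.Icc 1 ℓ,
      Complex.exp (2 * π * Complex.I * v * m1 * m2 / ℓ) * f m1 =
        if ℓ = m1 then ℓ * f ℓ else 0 := by
    intro m1 hm1
    have hdvd : (ℓ : ℤ) ∣ v * m1 ↔ ℓ = m1 := by
      rw [Finset.mem_Icc] at hm1
      refine ⟨fun h => ?_, fun h => h ▸ dvd_mul_left _ _⟩
      have : ℓ ∣ m1 := Int.natCast_dvd_natCast.mp (hv.symm.dvd_of_dvd_mul_left h)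
      exact le_antisymm (Nat.le_of_dvd (by omega) this) hm1.2
    rw [← Finset.sum_mul]
    have harg (m2 : ℕ) : 2 * π * Complex.I * v * m1 * m2 / ℓ =
        2 * π * Complex.I * ((v * m1 : ℤ) : ℂ) * m2 / ℓ := by
      push_cast; ring
    simp_rw [harg]
    rw [Complex.sum_Icc_exp_two_pi_I_mul_div hℓ.ne', if_congr hdvd rfl rfl]
    split_ifs with h <;> simp [h]
  rw [Finset.sum_congr rfl hinner, Finset.sum_ite_eq]
  simp [Nat.one_le_iff_ne_zero.mpr hℓ.ne']

lemma tendsto_sub_one_mul_Est {a : ℂ} (ha : a ≠ 0) {ℓ : ℕ} (hℓ : ℓ ≠ 0) (v : ℤ) :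
    Tendsto (fun w => (w - 1) * Est a ℓ v w) (𝓝[≠] 1)
      (𝓝 ((ℓ : ℂ) ^ (a - 2) * ∑ m1 ∈ Finset.Icc 1 ℓ, ∑ m2 ∈ Finset.Icc 1 ℓ,
        Complex.exp (2 * π * Complex.I * v * m1 * m2 / ℓ) *
          hurwitzZeta (((m1 : ℝ) / (ℓ : ℝ) : ℝ) : UnitAddCircle) (1 - a))) := by
  have hEst (w : ℂ) : (w - 1) * Est a ℓ v w = (ℓ : ℂ) ^ (a - 2 * w) *
      ∑ m1 ∈ Finset.Icc 1 ℓ, ∑ m2 ∈ Finset.Icc 1 ℓ,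
        Complex.exp (2 * π * Complex.I * v * m1 * m2 / ℓ) *
          hurwitzZeta (((m1 : ℝ) / (ℓ : ℝ) : ℝ) : UnitAddCircle) (w - a) *
          ((w - 1) * hurwitzZeta (((m2 : ℝ) / (ℓ : ℝ) : ℝ) : UnitAddCircle) w) := by
    simp only [Est, Finset.mul_sum]
    exact Finset.sum_congr rfl fun _ _ => Finset.sum_congr rfl fun _ _ => by ring
  simp only [hEst]
  have hpow : Tendsto (fun w : ℂ => (ℓ : ℂ) ^ (a - 2 * w)) (𝓝[≠] 1) (𝓝 ((ℓ : ℂ) ^ (a - 2))) := by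
    have hcont : Continuous fun w : ℂ => (ℓ : ℂ) ^ (a - 2 * w) :=
      (continuous_const.sub (continuous_const.mul continuous_id)).const_cpow
        (Or.inl (Nat.cast_ne_zero.mpr hℓ))
    simpa only [mul_one] using (hcont.tendsto 1).mono_left nhdsWithin_le_nhds
  refine hpow.mul (tendsto_finsetSum _ fun m1 _ => tendsto_finsetSum _ fun m2 _ => ?_)
  have hζ : ContinuousAt
      (fun w => hurwitzZeta (((m1 : ℝ) / (ℓ : ℝ) : ℝ) : UnitAddCircle) (w - a)) 1 :=
    (differentiableAt_hurwitzZeta _ (by simpa using ha)).continuousAt.comp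
      (continuousAt_id.sub continuousAt_const)
  simpa using (tendsto_const_nhds.mul (hζ.tendsto.mono_left nhdsWithin_le_nhds)).mul
    (hurwitzZeta_residue_one _)

lemma tendsto_sub_one_mul_Est_of_isCoprime {a : ℂ} (ha : a ≠ 0) {ℓ : ℕ} (hℓ : 0 < ℓ) {v : ℤ}
    (hv : IsCoprime v ℓ) :
    Tendsto (fun w => (w - 1) * Est a ℓ v w) (𝓝[≠] 1)
      (𝓝 ((ℓ : ℂ) ^ (a - 1) * riemannZeta (1 - a))) := by
  convert tendsto_sub_one_mul_Est ha hℓ.ne' v using 2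
  rw [sum_Icc_sum_Icc_exp_mul_mul hℓ hv, div_self (by exact_mod_cast hℓ.ne'),
    AddCircle.coe_period, hurwitzZeta_zero, show a - 1 = a - 2 + 1 by ring,
    Complex.cpow_add _ _ (by exact_mod_cast hℓ.ne'), Complex.cpow_one, mul_assoc]

lemma tendsto_add_mul_comp_one_sub_sub {f : ℂ → ℂ} {L : ℂ} (c : ℂ)
    (hf : Tendsto (fun w => (w - 1) * f w) (𝓝[≠] 1) (𝓝 L)) :
    Tendsto (fun s => (s + c) * f (1 - s - c)) (𝓝[≠] (-c)) (𝓝 (-L)) := by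
  have hmap : Tendsto (fun s => 1 - c - s) (𝓝[≠] (-c)) (𝓝[≠] 1) :=
    ((Homeomorph.subLeft (1 - c)).map_punctured_nhds_eq (-c)).le.trans_eq (by simp)
  refine (hf.comp hmap).neg.congr fun s => ?_
  simp only [Function.comp_apply, sub_right_comm (1 : ℂ) c s]
  ring

lemma Complex.continuousAt_Gamma_of_re_pos {s : ℂ} (hs : 0 < s.re) :
    ContinuousAt Complex.Gamma s :=
  (Complex.differentiableAt_Gamma s fun m h => by
    rw [h, Complex.neg_re, Complex.natCast_re] at hs
    linarith [m.cast_nonneg (α := ℝ)]).continuousAt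

lemma Complex.ofReal_div_cpow_mul_cpow {x y : ℝ} (hx : 0 ≤ x) (hy : 0 < y) (z w : ℂ) :
    ((x / y : ℝ) : ℂ) ^ z * (y : ℂ) ^ w = (x : ℂ) ^ z * (y : ℂ) ^ (w - z) := by
  rw [Complex.ofReal_div, Complex.div_cpow_ofReal_nonneg hx hy.le,
    Complex.cpow_sub _ _ (Complex.ofReal_ne_zero.mpr hy.ne')]
  ring

theorem calE_residue_at_neg_r1_general
    (n ℓ : ℕ) (hn : 0 < n) (hℓ : 0 < ℓ)
    (v : ℤ) (vbar : ℤ) (hvbar : v * vbar ≡ 1 [ZMOD (ℓ : ℤ)])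
    (r1 r2 d : ℂ) (hr1 : 0 < r1.re) (hr2 : 0 < r2.re) (hd : 0 < d.re) :
    Tendsto (fun s : ℂ => (s + r1) * calE n ℓ vbar r1 r2 d s) (𝓝[≠] (-r1))
      (𝓝 (-(Complex.Gamma (d + r1 + 1) / Complex.Gamma (d + r2 + 1)) *
        ((2 * π * Real.sqrt n : ℝ) : ℂ) ^ (-r1 + r2 - 1) * (ℓ : ℂ) ^ (-r2) *
        riemannZeta (1 + r1))) := by
  have hr1_ne : -r1 ≠ 0 := neg_ne_zero.mpr fun h => by simp [h] at hr1
  have hEst := tendsto_add_mul_comp_one_sub_sub r1 (tendsto_sub_one_mul_Est_of_isCoprime hr1_ne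
    hℓ (Int.isCoprime_of_mul_modEq_one hvbar).neg_left)
  have hB : 0 < 2 * π * Real.sqrt n := by positivity
  have hℓ' : (0 : ℝ) < ℓ := Nat.cast_pos.mpr hℓ
  have hfactor : ContinuousAt (fun s => Complex.Gamma (d - s + 1) /
      Complex.Gamma (d + s + r1 + r2 + 1) *
      ((2 * π * Real.sqrt n / (ℓ : ℝ) : ℝ) : ℂ) ^ (2 * s + r1 + r2 - 1)) (-r1) := by
    refine ContinuousAt.mul (ContinuousAt.div ?_ ?_ ?_) ?_
    · exact (Complex.continuousAt_Gamma_of_re_pos (by simp; linarith)).comp (by fun_prop)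
    · exact (Complex.continuousAt_Gamma_of_re_pos (by simp; linarith)).comp (by fun_prop)
    · exact Complex.Gamma_ne_zero_of_re_pos (by simp; linarith)
    · exact (by fun_prop : ContinuousAt (fun s : ℂ => 2 * s + r1 + r2 - 1) (-r1)).const_cpow
        (Or.inl (Complex.ofReal_ne_zero.mpr (by positivity)))
  convert (hfactor.tendsto.mono_left nhdsWithin_le_nhds).mul hEst using 2
  · simp only [calE]; ring
  · have hpow := Complex.ofReal_div_cpow_mul_cpow hB.le hℓ' (-r1 + r2 - 1) (-r1 - 1)
    rw [show -r1 - 1 - (-r1 + r2 - 1) = -r2 by ring, Complex.ofReal_natCast] at hpow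
    rw [show 2 * -r1 + r1 + r2 - 1 = -r1 + r2 - 1 by ring,
      show d + -r1 + r1 + r2 + 1 = d + r2 + 1 by ring, sub_neg_eq_add, sub_neg_eq_add]
    linear_combination
      (Complex.Gamma (d + r1 + 1) / Complex.Gamma (d + r2 + 1) * riemannZeta (1 + r1)) * hpow

/-- Residue of `𝓔` at the simple pole `s = −r1`. -/
theorem calE_residue_at_neg_r1
    (n ℓ : ℕ) (hn : 0 < n) (hℓ : 0 < ℓ)
    (v : ℤ) (hv : Int.gcd v ℓ = 1) (vbar : ℤ) (hvbar : v * vbar ≡ 1 [ZMOD (ℓ : ℤ)])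
    (r1 r2 d : ℂ) (hr1 : 0 < r1.re) (hr2 : 0 < r2.re) (hd : 0 < d.re) :
    Tendsto (fun s : ℂ => (s + r1) * calE n ℓ vbar r1 r2 d s) (𝓝[≠] (-r1))
      (𝓝 (-(Complex.Gamma (d + r1 + 1) / Complex.Gamma (d + r2 + 1)) *
        ((2 * π * Real.sqrt n : ℝ) : ℂ) ^ (-r1 + r2 - 1) * (ℓ : ℂ) ^ (-r2) *
        riemannZeta (1 + r1))) :=
  calE_residue_at_neg_r1_general n ℓ hn hℓ v vbar hvbar r1 r2 d hr1 hr2 hd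

end
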